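/- Let Θ = {θ_j^I} be a suitable set of moduli of continuity, and let {ν_n}_{n≥1} be a sequence of parametric b-measures on ℝ^N converging to a parametric b-measure ν₀ in the topology σ_Θ. Then for each integer j ≥ 1, each interval I = [q₁,q₂] with rational endpoints, and all rationals p₁, p₂ with q₁ ≤ p₁ < p₂ ≤ q₂, one has lim_{n→∞} sup_{y(·)∈𝒦_j^I} |∫_{p₁}^{p₂} d(ν_n)_{y(s)} − ∫_{p₁}^{p₂} d(ν₀)_{y(s)}| = 0. -/

import Mathlib

open MeasureTheory Set Filter Topology

/-- A (continuous real) b-measure: a set function on the bounded Borel subsets of `ℝ`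
which vanishes on `∅`, is countably additive over countable pairwise disjoint families
of bounded Borel sets with bounded union, and vanishes on singletons. -/
structure IsBMeasure (μ : Set ℝ → ℝ) : Prop where
  empty : μ ∅ = 0
  countably_additive : ∀ A : ℕ → Set ℝ, (∀ n, MeasurableSet (A n)) →
    (∀ n, Bornology.IsBounded (A n)) → Pairwise (Function.onFun Disjoint A) →
    Bornology.IsBounded (⋃ n, A n) →
    HasSum (fun n => μ (A n)) (μ (⋃ n, A n))
  singleton : ∀ t : ℝ, μ {t} = 0

/-- A locally finite atomless Borel measure on `ℝ`. -/
def GoodMeasure (m : Measure ℝ) : Prop :=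
  IsLocallyFiniteMeasure m ∧ ∀ t : ℝ, m {t} = 0

/-- `P` is a finite Borel partition of `A`. -/
def IsBorelPartition (A : Set ℝ) {n : ℕ} (P : Fin n → Set ℝ) : Prop :=
  (∀ i, MeasurableSet (P i)) ∧ Pairwise (Function.onFun Disjoint P) ∧ (⋃ i, P i) = A

/-- `|μ| ≤ m` : total-variation bound of the set function `μ` by the measure `m`,
expressed through finite Borel partitions of bounded Borel sets. -/
def TVLE (μ : Set ℝ → ℝ) (m : Measure ℝ) : Prop :=
  ∀ A : Set ℝ, Bornology.IsBounded A → MeasurableSet A →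
    ∀ (n : ℕ) (P : Fin n → Set ℝ), IsBorelPartition A P →
      ∑ i, |μ (P i)| ≤ (m A).toReal

/-- Partition-sum bound `Σ |μ₁(Aᵢ) - μ₂(Aᵢ)| ≤ c · l(A)` for the difference of two
set functions, over finite Borel partitions of bounded Borel sets. -/
def DiffLE (μ₁ μ₂ : Set ℝ → ℝ) (c : ℝ) (l : Measure ℝ) : Prop :=
  ∀ A : Set ℝ, Bornology.IsBounded A → MeasurableSet A →
    ∀ (n : ℕ) (P : Fin n → Set ℝ), IsBorelPartition A P →
      ∑ i, |μ₁ (P i) - μ₂ (P i)| ≤ c * (l A).toReal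

variable {E : Type*} [NormedAddCommGroup E]

/-- `m` is an m-bound of `ν` on the closed ball of radius `j`. -/
def HasMBound (ν : E → Set ℝ → ℝ) (j : ℕ) (m : Measure ℝ) : Prop :=
  GoodMeasure m ∧ ∀ y : E, ‖y‖ ≤ (j : ℝ) → TVLE (ν y) m

/-- `l` is an l-bound of `ν` on the closed ball of radius `j`, for the modulus `ω`. -/
def HasLBound (ω : ℝ → ℝ) (ν : E → Set ℝ → ℝ) (j : ℕ) (l : Measure ℝ) : Prop :=
  GoodMeasure l ∧ ∀ y₁ y₂ : E, ‖y₁‖ ≤ (j : ℝ) → ‖y₂‖ ≤ (j : ℝ) →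
    DiffLE (ν y₁) (ν y₂) (ω ‖y₁ - y₂‖) l

/-- A non-decreasing family of moduli of continuity `{ω_j}`. -/
structure IsModulusFamily (ω : ℕ → ℝ → ℝ) : Prop where
  continuousOn : ∀ j, ContinuousOn (ω j) (Ici 0)
  monotoneOn : ∀ j, MonotoneOn (ω j) (Ici 0)
  map_zero : ∀ j, ω j 0 = 0
  nonneg : ∀ j x, 0 ≤ x → 0 ≤ ω j x
  mono_index : ∀ j x, 0 ≤ x → ω j x ≤ ω (j + 1) x

/-- A parametric b-measure on `E` with respect to the family of moduli `ω`. -/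
def IsParamBMeasure (ω : ℕ → ℝ → ℝ) (ν : E → Set ℝ → ℝ) : Prop :=
  (∀ y, IsBMeasure (ν y)) ∧
    ∀ j : ℕ, 1 ≤ j → ∃ m l : Measure ℝ, HasMBound ν j m ∧ HasLBound (ω j) ν j l

/-- A tagged partition of `[a,b]`. -/
structure TaggedPartition (a b : ℝ) where
  k : ℕ
  k_pos : 0 < k
  t : ℕ → ℝ
  tag : ℕ → ℝ
  left : t 0 = a
  right : t k = b
  lt : ∀ i < k, t i < t (i + 1)
  tag_mem : ∀ i < k, tag i ∈ Set.Icc (t i) (t (i + 1))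

/-- The mesh of the tagged partition is `< δ`. -/
def TaggedPartition.MeshLT {a b : ℝ} (P : TaggedPartition a b) (δ : ℝ) : Prop :=
  ∀ i < P.k, P.t (i + 1) - P.t i < δ

/-- The Riemann sum of the parametric b-measure `ν` along the curve `y` over the
tagged partition `P`. -/
def RiemannSum (ν : E → Set ℝ → ℝ) (y : ℝ → E) {a b : ℝ} (P : TaggedPartition a b) : ℝ :=
  ∑ i ∈ Finset.range P.k, ν (y (P.tag i)) (Set.Icc (P.t i) (P.t (i + 1)))

/-- `L = ∫_a^b dν_{y(s)}` : `L` is the limit of the Riemann sums of `ν` along `y`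
over tagged partitions of `[a,b]` as the mesh tends to `0`. -/
def IsCurveIntegral (ν : E → Set ℝ → ℝ) (y : ℝ → E) (a b : ℝ) (L : ℝ) : Prop :=
  ∀ ε > 0, ∃ δ > 0, ∀ P : TaggedPartition a b, P.MeshLT δ → |L - RiemannSum ν y P| < ε

/-- A suitable set of moduli of continuity `Θ = {θ_j^{[q₁,q₂]}}`. -/
structure IsSuitableModuli (Θ : ℕ → ℚ → ℚ → ℝ → ℝ) : Prop where
  continuousOn : ∀ (j : ℕ) (q₁ q₂ : ℚ), q₁ < q₂ → ContinuousOn (Θ j q₁ q₂) (Ici 0)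
  monotoneOn : ∀ (j : ℕ) (q₁ q₂ : ℚ), q₁ < q₂ → MonotoneOn (Θ j q₁ q₂) (Ici 0)
  map_zero : ∀ (j : ℕ) (q₁ q₂ : ℚ), q₁ < q₂ → Θ j q₁ q₂ 0 = 0
  nonneg : ∀ (j : ℕ) (q₁ q₂ : ℚ) (x : ℝ), q₁ < q₂ → 0 ≤ x → 0 ≤ Θ j q₁ q₂ x
  mono : ∀ (j₁ j₂ : ℕ) (q₁ q₂ p₁ p₂ : ℚ), j₁ ≤ j₂ → q₁ ≤ p₁ → p₁ < p₂ → p₂ ≤ q₂ →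
    ∀ x : ℝ, 0 ≤ x → Θ j₁ p₁ p₂ x ≤ Θ j₂ q₁ q₂ x

/-- The set `𝒦_j^I` of continuous functions `y : I → E`, `I = [q₁,q₂]`, bounded by `j`
and admitting `θ_j^I` as modulus of continuity. -/
def KSet (E : Type*) [NormedAddCommGroup E] (Θ : ℕ → ℚ → ℚ → ℝ → ℝ)
    (j : ℕ) (q₁ q₂ : ℚ) : Set (ℝ → E) :=
  {y | ContinuousOn y (Set.Icc (q₁ : ℝ) (q₂ : ℝ)) ∧
    (∀ t ∈ Set.Icc (q₁ : ℝ) (q₂ : ℝ), ‖y t‖ ≤ (j : ℝ)) ∧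
    ∀ t₁ ∈ Set.Icc (q₁ : ℝ) (q₂ : ℝ), ∀ t₂ ∈ Set.Icc (q₁ : ℝ) (q₂ : ℝ),
      ‖y t₁ - y t₂‖ ≤ Θ j q₁ q₂ |t₁ - t₂|}

/-- Convergence `ν_n → ν₀` in the topology `σ_Θ` : the integrals along curves of
`𝒦_j^I` converge uniformly, for every `j` and every compact interval `I` with
rational endpoints. -/
def SigmaThetaTendsto {E : Type*} [NormedAddCommGroup E] (Θ : ℕ → ℚ → ℚ → ℝ → ℝ)
    (ν : ℕ → E → Set ℝ → ℝ) (ν₀ : E → Set ℝ → ℝ) : Prop :=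
  ∀ (j : ℕ) (q₁ q₂ : ℚ), q₁ < q₂ → ∀ ε > 0, ∃ n₀ : ℕ, ∀ n ≥ n₀,
    ∀ y ∈ KSet E Θ j q₁ q₂, ∀ L L₀ : ℝ,
      IsCurveIntegral (ν n) y (q₁ : ℝ) (q₂ : ℝ) L →
      IsCurveIntegral ν₀ y (q₁ : ℝ) (q₂ : ℝ) L₀ → |L - L₀| < ε

/-- The time-translate `ν·t` of a parametric b-measure: `(ν·t)_y(A) = ν_y(A + t)`. -/
def BTranslate (ν : E → Set ℝ → ℝ) (t : ℝ) : E → Set ℝ → ℝ :=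
  fun y A => ν y ((fun s => s + t) '' A)

/-- The time-translate `m·t` of a Borel measure: `(m·t)(A) = m(A + t)`. -/
noncomputable def MTranslate (m : Measure ℝ) (t : ℝ) : Measure ℝ :=
  Measure.map (fun s => s - t) m

/-- An N-dimensional parametric b-measure on `E` with common m-bounds `m j` and
common Lipschitz l-bounds `l j`. -/
def IsNDimParamBMeasure {M : ℕ} (νbar : Fin M → E → Set ℝ → ℝ)
    (m l : ℕ → Measure ℝ) : Prop :=
  (∀ i y, IsBMeasure (νbar i y)) ∧
    ∀ j : ℕ, 1 ≤ j → GoodMeasure (m j) ∧ GoodMeasure (l j) ∧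
      (∀ i, ∀ y : E, ‖y‖ ≤ (j : ℝ) → TVLE (νbar i y) (m j)) ∧
      (∀ i, ∀ y₁ y₂ : E, ‖y₁‖ ≤ (j : ℝ) → ‖y₂‖ ≤ (j : ℝ) →
        DiffLE (νbar i y₁) (νbar i y₂) ‖y₁ - y₂‖ (l j))

/-- The oriented curve integral: `∫_b^a := -∫_a^b`. -/
def IsSignedCurveIntegral (ν : E → Set ℝ → ℝ) (y : ℝ → E) (a b : ℝ) (L : ℝ) : Prop :=
  (a ≤ b ∧ IsCurveIntegral ν y a b L) ∨ (b < a ∧ IsCurveIntegral ν y b a (-L))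

/-- `y` is a solution on `S` of the Cauchy problem `y' = ν̄_y`, `y(t₀) = y₀`, for the
N-dimensional parametric b-measure `ν̄`: componentwise,
`y_i(t) = y_{0,i} + ∫_{t₀}^t dν^i_{y(s)}`. -/
def IsSolutionOn {M : ℕ} (νbar : Fin M → EuclideanSpace ℝ (Fin M) → Set ℝ → ℝ)
    (t₀ : ℝ) (y₀ : EuclideanSpace ℝ (Fin M)) (S : Set ℝ)
    (y : ℝ → EuclideanSpace ℝ (Fin M)) : Prop :=
  t₀ ∈ S ∧ y t₀ = y₀ ∧ ContinuousOn y S ∧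
    ∀ t ∈ S, ∀ i : Fin M, IsSignedCurveIntegral (νbar i) y t₀ t (y t i - y₀ i)

/-- `y` is the maximal (noncontinuable) solution, defined on the open interval `S`:
every solution on an interval containing `t₀` is a restriction of `y`. -/
def IsMaximalSolution {M : ℕ} (νbar : Fin M → EuclideanSpace ℝ (Fin M) → Set ℝ → ℝ)
    (t₀ : ℝ) (y₀ : EuclideanSpace ℝ (Fin M)) (S : Set ℝ)
    (y : ℝ → EuclideanSpace ℝ (Fin M)) : Prop :=
  IsSolutionOn νbar t₀ y₀ S y ∧ IsOpen S ∧ S.OrdConnected ∧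
    ∀ S' : Set ℝ, S'.OrdConnected → ∀ z, IsSolutionOn νbar t₀ y₀ S' z →
      S' ⊆ S ∧ Set.EqOn z y S'

/-!
Freeze a curve `y ∈ 𝒦_j^I` outside `[p₁, p₂]`: since the projection onto `[p₁, p₂]` is
1-Lipschitz, `z = y ∘ projIcc p₁ p₂` is again in `𝒦_j^I`, and additivity of the integral over
adjacent intervals gives
`∫_I dν_{z(s)} = ν_{y(p₁)}([q₁, p₁]) + ∫_{p₁}^{p₂} dν_{y(s)} + ν_{y(p₂)}([p₂, q₂])`.
The left-hand side converges uniformly by `σ_Θ`-convergence on `I`, and the two boundary terms are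
integrals along constant curves, which converge uniformly by `σ_Θ`-convergence on `[q₁, p₁]` and
`[p₂, q₂]`.

Additivity is where the l-bounds enter: cutting a fine tagged partition at the junction point
moves a single tag by less than the mesh, and the l-bound together with the moduli of continuity of
`ω_j` and `θ_j^I` makes `t ↦ ν_{y(t)}` uniformly continuous on Borel subsets of `I`.
-/

namespace IsBMeasure

variable {μ : Set ℝ → ℝ}

theorem union (hμ : IsBMeasure μ) {B C : Set ℝ} (hB : MeasurableSet B) (hC : MeasurableSet C)
    (hBb : Bornology.IsBounded B) (hCb : Bornology.IsBounded C) (hBC : Disjoint B C) :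
    μ (B ∪ C) = μ B + μ C := by
  let A : ℕ → Set ℝ := fun n => if n = 0 then B else if n = 1 then C else ∅
  have hA : ∀ n, A (n + 2) = ∅ := fun _ => rfl
  have hU : ⋃ n, A n = B ∪ C := by
    ext x
    simp only [mem_iUnion, mem_union]
    constructor
    · rintro ⟨_ | _ | n, hx⟩
      exacts [Or.inl hx, Or.inr hx, absurd hx (by simp [hA])]
    · rintro (hx | hx)
      exacts [⟨0, hx⟩, ⟨1, hx⟩]
  have hdisj : Pairwise (Function.onFun Disjoint A) := by
    rintro (_ | _ | m) (_ | _ | n) hmn <;>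
      simp_all [Function.onFun, A, hBC.symm]
  have hsum := hμ.countably_additive A
    (by rintro (_ | _ | n) <;> simp [A, hB, hC])
    (by rintro (_ | _ | n) <;> simp [A, hBb, hCb]) hdisj (hU ▸ hBb.union hCb)
  rw [hU] at hsum
  refine hsum.unique ?_
  have hfin : ∀ n ∉ ({0, 1} : Finset ℕ), μ (A n) = 0 := by
    rintro (_ | _ | n) hn
    exacts [absurd (by simp) hn, absurd (by simp) hn, hA n ▸ hμ.empty]
  simpa [A] using hasSum_sum_of_ne_finset_zero hfin

theorem Icc_union_Ioc (hμ : IsBMeasure μ) {u v w : ℝ} (huv : u ≤ v) (hvw : v ≤ w) :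
    μ (Icc u w) = μ (Icc u v) + μ (Ioc v w) := by
  rw [← Icc_union_Ioc_eq_Icc huv hvw, hμ.union measurableSet_Icc measurableSet_Ioc
    (Metric.isBounded_Icc u v) (Metric.isBounded_Ioc v w)
    (disjoint_left.2 fun _ hx hx' => hx'.1.not_ge hx.2)]

theorem Icc_add_Icc (hμ : IsBMeasure μ) {u v w : ℝ} (huv : u ≤ v) (hvw : v ≤ w) :
    μ (Icc u w) = μ (Icc u v) + μ (Icc v w) := by
  rw [hμ.Icc_union_Ioc huv hvw, hμ.Icc_union_Ioc le_rfl hvw, Icc_self, hμ.singleton, zero_add]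

theorem sum_Icc (hμ : IsBMeasure μ) {t : ℕ → ℝ} {k : ℕ} (ht : MonotoneOn t (Iic k)) :
    ∑ i ∈ Finset.range k, μ (Icc (t i) (t (i + 1))) = μ (Icc (t 0) (t k)) := by
  induction k with
  | zero => simp [hμ.singleton]
  | succ k ih =>
    rw [Finset.sum_range_succ, ih (ht.mono (Iic_subset_Iic.2 k.le_succ)),
      ← hμ.Icc_add_Icc (ht (by simp) (by simp) k.zero_le) (ht (by simp) (by simp) k.le_succ)]

end IsBMeasure

namespace TaggedPartition

variable {a b : ℝ} (P : TaggedPartition a b)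

theorem strictMonoOn_t : StrictMonoOn P.t (Iic P.k) :=
  strictMonoOn_Iic_of_lt_succ P.lt

theorem t_mem {i : ℕ} (hi : i ≤ P.k) : P.t i ∈ Icc a b := by
  have h₀ := P.strictMonoOn_t.monotoneOn (by simp) hi i.zero_le
  have h₁ := P.strictMonoOn_t.monotoneOn hi (by simp) hi
  rw [P.left] at h₀
  rw [P.right] at h₁
  exact ⟨h₀, h₁⟩

theorem tag_mem_Icc {i : ℕ} (hi : i < P.k) : P.tag i ∈ Icc a b :=
  ⟨(P.t_mem hi.le).1.trans (P.tag_mem i hi).1, (P.tag_mem i hi).2.trans (P.t_mem hi).2⟩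

variable {P} in
theorem MeshLT.mono {δ δ' : ℝ} (hP : P.MeshLT δ) (hδ : δ ≤ δ') : P.MeshLT δ' :=
  fun i hi => (hP i hi).trans_le hδ

theorem exists_mem_Ioc {c : ℝ} (hc : c ∈ Ioc a b) :
    ∃ i < P.k, c ∈ Ioc (P.t i) (P.t (i + 1)) := by
  classical
  have hex : ∃ m, c ≤ P.t m ∧ m ≤ P.k := ⟨P.k, by rw [P.right]; exact hc.2, le_rfl⟩
  obtain ⟨hcm, hmk⟩ := Nat.find_spec hex
  have hpos : Nat.find hex ≠ 0 := fun h => by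
    rw [h, P.left] at hcm
    exact hc.1.not_ge hcm
  refine ⟨Nat.find hex - 1, by omega, ?_, by rwa [Nat.sub_add_cancel (by omega)]⟩
  by_contra hle
  exact Nat.find_min hex (m := Nat.find hex - 1) (by omega) ⟨not_lt.1 hle, by omega⟩

def splitLeft (i : ℕ) (hi : i < P.k) {c : ℝ} (hc : P.t i < c) (s : ℝ) (hs : s ∈ Icc (P.t i) c) :
    TaggedPartition a c where
  k := i + 1
  k_pos := i.succ_pos
  t m := if m ≤ i then P.t m else c
  tag m := if m < i then P.tag m else s
  left := by simp [P.left]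
  right := by simp
  lt m hm := by
    rcases (Nat.lt_succ_iff.1 hm).lt_or_eq with hm | rfl
    · simpa [hm.le, Nat.succ_le_of_lt hm] using P.lt m (hm.trans hi)
    · simpa using hc
  tag_mem m hm := by
    rcases (Nat.lt_succ_iff.1 hm).lt_or_eq with hm | rfl
    · simpa [hm, hm.le, Nat.succ_le_of_lt hm] using P.tag_mem m (hm.trans hi)
    · simpa using hs

def splitRight (i : ℕ) (hi : i < P.k) {c : ℝ} (hc : c < P.t (i + 1)) (s : ℝ)
    (hs : s ∈ Icc c (P.t (i + 1))) : TaggedPartition c b where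
  k := P.k - i
  k_pos := by omega
  t m := if m = 0 then c else P.t (i + m)
  tag m := if m = 0 then s else P.tag (i + m)
  left := by simp
  right := by simp [show P.k - i ≠ 0 by omega, Nat.add_sub_cancel' hi.le, P.right]
  lt m hm := by
    rcases m with _ | m
    · simpa using hc
    · exact P.lt (i + (m + 1)) (by omega)
  tag_mem m hm := by
    rcases m with _ | m
    · simpa using hs
    · exact P.tag_mem (i + (m + 1)) (by omega)

variable {i : ℕ} {c : ℝ}

variable {P} in
theorem MeshLT.splitLeft (hi : i < P.k) {δ : ℝ} (hP : P.MeshLT δ)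
    (hc : c ∈ Ioc (P.t i) (P.t (i + 1))) {s : ℝ} (hs : s ∈ Icc (P.t i) c) :
    (P.splitLeft i hi hc.1 s hs).MeshLT δ := by
  intro m (hm : m < i + 1)
  rcases (Nat.lt_succ_iff.1 hm).lt_or_eq with hm | rfl
  · simpa [TaggedPartition.splitLeft, hm.le, Nat.succ_le_of_lt hm] using hP m (hm.trans hi)
  · simpa [TaggedPartition.splitLeft] using (sub_le_sub_right hc.2 _).trans_lt (hP m hi)

variable {P} in
theorem MeshLT.splitRight (hi : i < P.k) {δ : ℝ} (hP : P.MeshLT δ)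
    (hc : c ∈ Ico (P.t i) (P.t (i + 1))) {s : ℝ} (hs : s ∈ Icc c (P.t (i + 1))) :
    (P.splitRight i hi hc.2 s hs).MeshLT δ := by
  rintro (_ | m) (hm : _ < P.k - i)
  · simpa [TaggedPartition.splitRight] using (sub_le_sub_left hc.1 _).trans_lt (hP i hi)
  · exact hP (i + (m + 1)) (by omega)

variable {F : Type*} (ν : F → Set ℝ → ℝ) (y : ℝ → F)

theorem riemannSum_eq_sum_range_add_sum_Ico (hi : i < P.k) :
    RiemannSum ν y P = ∑ m ∈ Finset.range i, ν (y (P.tag m)) (Icc (P.t m) (P.t (m + 1))) +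
      ν (y (P.tag i)) (Icc (P.t i) (P.t (i + 1))) +
      ∑ m ∈ Finset.Ico (i + 1) P.k, ν (y (P.tag m)) (Icc (P.t m) (P.t (m + 1))) := by
  rw [RiemannSum, ← Finset.sum_range_succ]
  exact (Finset.sum_range_add_sum_Ico _ hi).symm

theorem riemannSum_splitLeft (hi : i < P.k) (hc : P.t i < c) (s : ℝ) (hs : s ∈ Icc (P.t i) c) :
    RiemannSum ν y (P.splitLeft i hi hc s hs) =
      ∑ m ∈ Finset.range i, ν (y (P.tag m)) (Icc (P.t m) (P.t (m + 1))) +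
        ν (y s) (Icc (P.t i) c) := by
  simp only [RiemannSum, splitLeft, Finset.sum_range_succ, lt_irrefl, le_refl, if_false, if_true,
    add_le_iff_nonpos_right, Nat.not_succ_le_self]
  congr 1
  refine Finset.sum_congr rfl fun m hm => ?_
  have hm := Finset.mem_range.1 hm
  simp [hm, hm.le, Nat.succ_le_of_lt hm]

theorem riemannSum_splitRight (hi : i < P.k) (hc : c < P.t (i + 1)) (s : ℝ)
    (hs : s ∈ Icc c (P.t (i + 1))) :
    RiemannSum ν y (P.splitRight i hi hc s hs) = ν (y s) (Icc c (P.t (i + 1))) +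
      ∑ m ∈ Finset.Ico (i + 1) P.k, ν (y (P.tag m)) (Icc (P.t m) (P.t (m + 1))) := by
  have hk : (P.splitRight i hi hc s hs).k = P.k - (i + 1) + 1 := by
    simp only [splitRight]
    omega
  rw [RiemannSum, hk, Finset.sum_range_succ', Finset.sum_Ico_eq_sum_range, add_comm]
  refine congrArg _ (Finset.sum_congr rfl fun m _ => ?_)
  simp only [splitRight, Nat.add_eq_zero_iff, one_ne_zero, and_false, if_false]
  rw [show i + 1 + m = i + (m + 1) by omega]
  rfl

end TaggedPartition

section CurveIntegral

variable {F : Type*} {ν : F → Set ℝ → ℝ} {y z : ℝ → F} {a b c L : ℝ}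

theorem TaggedPartition.riemannSum_congr (P : TaggedPartition a b) (hyz : EqOn y z (Icc a b)) :
    RiemannSum ν y P = RiemannSum ν z P :=
  Finset.sum_congr rfl fun i hi => by rw [hyz (P.tag_mem_Icc (Finset.mem_range.1 hi))]

theorem IsCurveIntegral.congr (h : IsCurveIntegral ν y a b L) (hyz : EqOn y z (Icc a b)) :
    IsCurveIntegral ν z a b L := by
  intro ε hε
  obtain ⟨δ, hδ, hP⟩ := h ε hε
  exact ⟨δ, hδ, fun P hPδ => P.riemannSum_congr hyz ▸ hP P hPδ⟩

theorem isCurveIntegral_const {x : F} (hx : IsBMeasure (ν x)) (a b : ℝ) :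
    IsCurveIntegral ν (fun _ => x) a b (ν x (Icc a b)) := by
  intro ε hε
  refine ⟨1, one_pos, fun P _ => ?_⟩
  rw [RiemannSum, hx.sum_Icc P.strictMonoOn_t.monotoneOn, P.left, P.right, sub_self, abs_zero]
  exact hε

def UniformlyContinuousAlong (ν : F → Set ℝ → ℝ) (y : ℝ → F) (a b : ℝ) : Prop :=
  ∀ η > 0, ∃ δ > 0, ∀ t₁ ∈ Icc a b, ∀ t₂ ∈ Icc a b, |t₁ - t₂| < δ →
    ∀ A ⊆ Icc a b, MeasurableSet A → |ν (y t₁) A - ν (y t₂) A| ≤ η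

theorem UniformlyContinuousAlong.mono {a' b' : ℝ} (hy : UniformlyContinuousAlong ν y a b)
    (ha : a ≤ a') (hb : b' ≤ b) : UniformlyContinuousAlong ν y a' b' := by
  have hsub := Icc_subset_Icc ha hb
  intro η hη
  obtain ⟨δ, hδ, h⟩ := hy η hη
  exact ⟨δ, hδ, fun t₁ ht₁ t₂ ht₂ ht A hA => h t₁ (hsub ht₁) t₂ (hsub ht₂) ht A (hA.trans hsub)⟩

/-- Cutting a fine tagged partition at `c` only affects the cell containing `c`, whose tag is
replaced by the nearest point of each half; if `c` is a node, nothing changes. -/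
theorem TaggedPartition.exists_split_riemannSum (hν : ∀ x, IsBMeasure (ν x)) {η δ : ℝ}
    (hη : 0 ≤ η) (hδ : ∀ t₁ ∈ Icc a b, ∀ t₂ ∈ Icc a b, |t₁ - t₂| < δ →
      ∀ A ⊆ Icc a b, MeasurableSet A → |ν (y t₁) A - ν (y t₂) A| ≤ η)
    (P : TaggedPartition a b) (hP : P.MeshLT δ) (hc : c ∈ Ioo a b) :
    ∃ (P₁ : TaggedPartition a c) (P₂ : TaggedPartition c b), P₁.MeshLT δ ∧ P₂.MeshLT δ ∧
      |RiemannSum ν y P - (RiemannSum ν y P₁ + RiemannSum ν y P₂)| ≤ 2 * η := by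
  obtain ⟨i, hi, hci⟩ := P.exists_mem_Ioc (Ioo_subset_Ioc_self hc)
  rcases hci.2.lt_or_eq with hlt | rfl
  · have hτ := P.tag_mem i hi
    have hs₁ : min (P.tag i) c ∈ Icc (P.t i) c := ⟨le_min hτ.1 hci.1.le, min_le_right _ _⟩
    have hs₂ : max (P.tag i) c ∈ Icc c (P.t (i + 1)) := ⟨le_max_right _ _, max_le hτ.2 hlt.le⟩
    refine ⟨P.splitLeft i hi hci.1 _ hs₁, P.splitRight i hi hlt _ hs₂, hP.splitLeft hi hci hs₁,
      hP.splitRight hi ⟨hci.1.le, hlt⟩ hs₂, ?_⟩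
    have hcell : Icc (P.t i) (P.t (i + 1)) ⊆ Icc a b :=
      Icc_subset_Icc (P.t_mem hi.le).1 (P.t_mem hi).2
    have hclose : ∀ s ∈ Icc (P.t i) (P.t (i + 1)), |P.tag i - s| < δ := fun s hs =>
      (Real.dist_le_of_mem_Icc hτ hs).trans_lt (hP i hi)
    have e₁ := hδ _ (hcell hτ) _ (hcell ⟨hs₁.1, hs₁.2.trans hlt.le⟩)
      (hclose _ ⟨hs₁.1, hs₁.2.trans hlt.le⟩) _ ((Icc_subset_Icc_right hlt.le).trans hcell)
      measurableSet_Icc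
    have e₂ := hδ _ (hcell hτ) _ (hcell ⟨hci.1.le.trans hs₂.1, hs₂.2⟩)
      (hclose _ ⟨hci.1.le.trans hs₂.1, hs₂.2⟩) _ ((Icc_subset_Icc_left hci.1.le).trans hcell)
      measurableSet_Icc
    rw [P.riemannSum_eq_sum_range_add_sum_Ico ν y hi, P.riemannSum_splitLeft,
      P.riemannSum_splitRight, (hν _).Icc_add_Icc hci.1.le hlt.le]
    rw [abs_le] at e₁ e₂ ⊢
    constructor <;> linarith [e₁.1, e₁.2, e₂.1, e₂.2]
  · have hi' : i + 1 < P.k := by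
      by_contra! h
      have hk : i + 1 = P.k := by omega
      exact hc.2.ne (hk ▸ P.right)
    refine ⟨P.splitLeft i hi hci.1 _ (P.tag_mem i hi),
      P.splitRight (i + 1) hi' (P.lt _ hi') _ (P.tag_mem _ hi'),
      hP.splitLeft hi hci _, hP.splitRight hi' ⟨le_rfl, P.lt _ hi'⟩ _, ?_⟩
    rw [P.riemannSum_eq_sum_range_add_sum_Ico ν y hi, P.riemannSum_splitLeft,
      P.riemannSum_splitRight, Finset.sum_eq_sum_Ico_succ_bot hi']
    simpa using mul_nonneg zero_le_two hη

theorem IsCurveIntegral.add (hν : ∀ x, IsBMeasure (ν x)) (hy : UniformlyContinuousAlong ν y a b)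
    (hac : a < c) (hcb : c < b) {L₁ L₂ : ℝ} (h₁ : IsCurveIntegral ν y a c L₁)
    (h₂ : IsCurveIntegral ν y c b L₂) : IsCurveIntegral ν y a b (L₁ + L₂) := by
  intro ε hε
  obtain ⟨δ₁, hδ₁, H₁⟩ := h₁ (ε / 3) (by positivity)
  obtain ⟨δ₂, hδ₂, H₂⟩ := h₂ (ε / 3) (by positivity)
  obtain ⟨δ₃, hδ₃, H₃⟩ := hy (ε / 6) (by positivity)
  refine ⟨min δ₁ (min δ₂ δ₃), by positivity, fun P hP => ?_⟩
  obtain ⟨P₁, P₂, hP₁, hP₂, hsplit⟩ := P.exists_split_riemannSum hν (by positivity)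
    (fun t₁ ht₁ t₂ ht₂ ht => H₃ t₁ ht₁ t₂ ht₂ (ht.trans_le (by simp))) hP ⟨hac, hcb⟩
  have e₁ := H₁ P₁ (hP₁.mono (min_le_left _ _))
  have e₂ := H₂ P₂ (hP₂.mono ((min_le_right _ _).trans (min_le_left _ _)))
  rw [abs_lt] at e₁ e₂ ⊢
  rw [abs_le] at hsplit
  constructor <;> linarith [e₁.1, e₁.2, e₂.1, e₂.2, hsplit.1, hsplit.2]

theorem IsCurveIntegral.const_add (hν : ∀ x, IsBMeasure (ν x))
    (hy : UniformlyContinuousAlong ν y a b) (hac : a ≤ c) (hcb : c < b)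
    (hyc : ∀ t ∈ Icc a c, y t = y c) (h : IsCurveIntegral ν y c b L) :
    IsCurveIntegral ν y a b (ν (y c) (Icc a c) + L) := by
  rcases hac.eq_or_lt with rfl | hac
  · simpa [(hν _).singleton] using h
  · exact ((isCurveIntegral_const (hν (y c)) a c).congr fun t ht => (hyc t ht).symm).add
      hν hy hac hcb h

theorem IsCurveIntegral.add_const (hν : ∀ x, IsBMeasure (ν x))
    (hy : UniformlyContinuousAlong ν y a b) (hac : a < c) (hcb : c ≤ b)
    (hyc : ∀ t ∈ Icc c b, y t = y c) (h : IsCurveIntegral ν y a c L) :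
    IsCurveIntegral ν y a b (L + ν (y c) (Icc c b)) := by
  rcases hcb.eq_or_lt with rfl | hcb
  · simpa [(hν _).singleton] using h
  · exact h.add hν hy hac hcb
      ((isCurveIntegral_const (hν (y c)) c b).congr fun t ht => (hyc t ht).symm)

theorem IsCurveIntegral.comp_projIcc (hν : ∀ x, IsBMeasure (ν x)) {p₁ p₂ : ℝ} (hp : p₁ < p₂)
    (ha : a ≤ p₁) (hb : p₂ ≤ b)
    (hy : UniformlyContinuousAlong ν (fun t => y (projIcc p₁ p₂ hp.le t)) a b)
    (h : IsCurveIntegral ν y p₁ p₂ L) :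
    IsCurveIntegral ν (fun t => y (projIcc p₁ p₂ hp.le t)) a b
      (ν (y p₁) (Icc a p₁) + (L + ν (y p₂) (Icc p₂ b))) := by
  have h' := (h.congr fun t ht => by simp [projIcc_of_mem _ ht]).add_const hν
    (hy.mono ha le_rfl) hp hb fun t ht => by simp [projIcc_of_right_le _ ht.1]
  simpa using h'.const_add hν hy ha (hp.trans_le hb) fun t ht => by
    simp [projIcc_of_le_left _ ht.2]

end CurveIntegral

theorem DiffLE.abs_sub_le {μ₁ μ₂ : Set ℝ → ℝ} {c : ℝ} {l : Measure ℝ} (h : DiffLE μ₁ μ₂ c l)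
    {A : Set ℝ} (hAb : Bornology.IsBounded A) (hA : MeasurableSet A) :
    |μ₁ A - μ₂ A| ≤ c * (l A).toReal := by
  simpa using h A hAb hA 1 (fun _ => A) ⟨fun _ => hA, Subsingleton.pairwise, iUnion_const A⟩

section ModuliOfContinuity

variable {ν : E → Set ℝ → ℝ} {y : ℝ → E} {a b : ℝ}

theorem HasLBound.uniformlyContinuousAlong {ω θ : ℝ → ℝ} {j : ℕ} {l : Measure ℝ}
    (hl : HasLBound ω ν j l) (hω : Tendsto ω (𝓝[≥] 0) (𝓝 0)) (hθ : Tendsto θ (𝓝[≥] 0) (𝓝 0))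
    (hyj : ∀ t ∈ Icc a b, ‖y t‖ ≤ j)
    (hyθ : ∀ t₁ ∈ Icc a b, ∀ t₂ ∈ Icc a b, ‖y t₁ - y t₂‖ ≤ θ |t₁ - t₂|) :
    UniformlyContinuousAlong ν y a b := by
  intro η hη
  have := hl.1.1
  set C := (l (Icc a b)).toReal + 1
  obtain ⟨ρ, hρ, hωρ⟩ := Metric.tendsto_nhdsWithin_nhds.1 hω (η / C) (by positivity)
  obtain ⟨δ, hδ, hθδ⟩ := Metric.tendsto_nhdsWithin_nhds.1 hθ ρ hρ
  refine ⟨δ, hδ, fun t₁ ht₁ t₂ ht₂ ht A hA hAm => ?_⟩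
  have hθt : θ |t₁ - t₂| < ρ := by
    have := hθδ (mem_Ici.2 (abs_nonneg (t₁ - t₂))) (by simpa [Real.dist_eq] using ht)
    exact (le_abs_self _).trans_lt (by simpa [Real.dist_eq] using this)
  have hωt : ω ‖y t₁ - y t₂‖ < η / C := by
    have := hωρ (mem_Ici.2 (norm_nonneg (y t₁ - y t₂)))
      (by simpa [Real.dist_eq] using (hyθ t₁ ht₁ t₂ ht₂).trans_lt hθt)
    exact (le_abs_self _).trans_lt (by simpa [Real.dist_eq] using this)
  have hlA : (l A).toReal ≤ C := by
    have := ENNReal.toReal_mono (isCompact_Icc.measure_lt_top (μ := l)).ne (measure_mono hA)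
    linarith
  calc |ν (y t₁) A - ν (y t₂) A| ≤ ω ‖y t₁ - y t₂‖ * (l A).toReal :=
        (hl.2 _ _ (hyj t₁ ht₁) (hyj t₂ ht₂)).abs_sub_le (Metric.isBounded_Icc a b |>.subset hA) hAm
    _ ≤ η / C * C := mul_le_mul hωt.le hlA ENNReal.toReal_nonneg (by positivity)
    _ = η := div_mul_cancel₀ η (by positivity)

variable {Θ : ℕ → ℚ → ℚ → ℝ → ℝ} {j : ℕ} {q₁ q₂ : ℚ}

theorem KSet.const_mem (hΘ : IsSuitableModuli Θ) (hq : q₁ < q₂) {x : E} (hx : ‖x‖ ≤ j) :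
    (fun _ => x) ∈ KSet E Θ j q₁ q₂ :=
  ⟨continuousOn_const, fun _ _ => hx,
    fun _ _ _ _ => by simpa using hΘ.nonneg j q₁ q₂ _ hq (abs_nonneg _)⟩

theorem KSet.comp_projIcc_mem (hΘ : IsSuitableModuli Θ) (hq : q₁ < q₂)
    (hy : y ∈ KSet E Θ j q₁ q₂) {p₁ p₂ : ℝ} (hp : p₁ ≤ p₂) (hq₁ : (q₁ : ℝ) ≤ p₁)
    (hq₂ : p₂ ≤ q₂) : (fun t => y (projIcc p₁ p₂ hp t)) ∈ KSet E Θ j q₁ q₂ := by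
  have hmem : ∀ t, (projIcc p₁ p₂ hp t : ℝ) ∈ Icc (q₁ : ℝ) q₂ := fun t =>
    Icc_subset_Icc hq₁ hq₂ (projIcc p₁ p₂ hp t).2
  refine ⟨(hy.1.comp_continuous (continuous_subtype_val.comp continuous_projIcc) hmem).continuousOn,
    fun t _ => hy.2.1 _ (hmem t), fun t₁ _ t₂ _ => ?_⟩
  exact (hy.2.2 _ (hmem t₁) _ (hmem t₂)).trans (hΘ.monotoneOn j q₁ q₂ hq
    (mem_Ici.2 (abs_nonneg _)) (mem_Ici.2 (abs_nonneg _)) (abs_projIcc_sub_projIcc hp))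

theorem IsParamBMeasure.uniformlyContinuousAlong {ω : ℕ → ℝ → ℝ} (hν : IsParamBMeasure ω ν)
    (hω : IsModulusFamily ω) (hΘ : IsSuitableModuli Θ) (hj : 1 ≤ j) (hq : q₁ < q₂)
    (hy : y ∈ KSet E Θ j q₁ q₂) : UniformlyContinuousAlong ν y q₁ q₂ := by
  obtain ⟨-, l, -, hl⟩ := hν.2 j hj
  exact hl.uniformlyContinuousAlong
    (by simpa [hω.map_zero j] using (hω.continuousOn j 0 self_mem_Ici).tendsto)
    (by simpa [hΘ.map_zero j q₁ q₂ hq] using (hΘ.continuousOn j q₁ q₂ hq 0 self_mem_Ici).tendsto)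
    hy.2.1 hy.2.2

theorem SigmaThetaTendsto.tendsto_apply_Icc {ν : ℕ → E → Set ℝ → ℝ} {ν₀ : E → Set ℝ → ℝ}
    (hconv : SigmaThetaTendsto Θ ν ν₀) (hΘ : IsSuitableModuli Θ) (hν : ∀ n x, IsBMeasure (ν n x))
    (hν₀ : ∀ x, IsBMeasure (ν₀ x)) (j : ℕ) {q p : ℚ} (hqp : q ≤ p) :
    ∀ ε > 0, ∃ n₀ : ℕ, ∀ n ≥ n₀, ∀ x : E, ‖x‖ ≤ j →
      |ν n x (Icc (q : ℝ) p) - ν₀ x (Icc (q : ℝ) p)| < ε := by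
  intro ε hε
  rcases hqp.eq_or_lt with rfl | hqp
  · exact ⟨0, fun n _ x _ => by simpa [(hν n x).singleton, (hν₀ x).singleton] using hε⟩
  · obtain ⟨n₀, h⟩ := hconv j q p hqp ε hε
    exact ⟨n₀, fun n hn x hx => h n hn _ (KSet.const_mem hΘ hqp hx) _ _
      (isCurveIntegral_const (hν n x) _ _) (isCurveIntegral_const (hν₀ x) _ _)⟩

end ModuliOfContinuity

theorem stmt6 {N : ℕ} (ω : ℕ → ℝ → ℝ) (hω : IsModulusFamily ω)
    (Θ : ℕ → ℚ → ℚ → ℝ → ℝ) (hΘ : IsSuitableModuli Θ)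
    (ν : ℕ → EuclideanSpace ℝ (Fin N) → Set ℝ → ℝ)
    (ν₀ : EuclideanSpace ℝ (Fin N) → Set ℝ → ℝ)
    (hν : ∀ n, IsParamBMeasure ω (ν n)) (hν₀ : IsParamBMeasure ω ν₀)
    (hconv : SigmaThetaTendsto Θ ν ν₀)
    (j : ℕ) (hj : 1 ≤ j) (q₁ q₂ p₁ p₂ : ℚ)
    (h1 : q₁ ≤ p₁) (h2 : p₁ < p₂) (h3 : p₂ ≤ q₂) :
    ∀ ε > 0, ∃ n₀ : ℕ, ∀ n ≥ n₀,
      ∀ y ∈ KSet (EuclideanSpace ℝ (Fin N)) Θ j q₁ q₂, ∀ L L₀ : ℝ,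
        IsCurveIntegral (ν n) y (p₁ : ℝ) (p₂ : ℝ) L →
        IsCurveIntegral ν₀ y (p₁ : ℝ) (p₂ : ℝ) L₀ → |L - L₀| < ε := by
  intro ε hε
  have hq : q₁ < q₂ := h1.trans_lt (h2.trans_le h3)
  have hp : (p₁ : ℝ) < p₂ := by exact_mod_cast h2
  have hq₁ : (q₁ : ℝ) ≤ p₁ := by exact_mod_cast h1
  have hq₂ : (p₂ : ℝ) ≤ q₂ := by exact_mod_cast h3
  have hbm : ∀ n x, IsBMeasure (ν n x) := fun n => (hν n).1
  obtain ⟨n₁, hn₁⟩ := hconv j q₁ q₂ hq (ε / 3) (by positivity)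
  obtain ⟨n₂, hn₂⟩ := hconv.tendsto_apply_Icc hΘ hbm hν₀.1 j h1 (ε / 3) (by positivity)
  obtain ⟨n₃, hn₃⟩ := hconv.tendsto_apply_Icc hΘ hbm hν₀.1 j h3 (ε / 3) (by positivity)
  refine ⟨max n₁ (max n₂ n₃), fun n hn y hy L L₀ hL hL₀ => ?_⟩
  have hz := KSet.comp_projIcc_mem hΘ hq hy hp.le hq₁ hq₂
  have e₁ := hn₁ n (le_of_max_le_left hn) _ hz _ _
    (hL.comp_projIcc (hbm n) hp hq₁ hq₂ ((hν n).uniformlyContinuousAlong hω hΘ hj hq hz))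
    (hL₀.comp_projIcc hν₀.1 hp hq₁ hq₂ (hν₀.uniformlyContinuousAlong hω hΘ hj hq hz))
  have e₂ := hn₂ n (by omega) (y p₁) (hy.2.1 _ ⟨hq₁, hp.le.trans hq₂⟩)
  have e₃ := hn₃ n (by omega) (y p₂) (hy.2.1 _ ⟨hq₁.trans hp.le, hq₂⟩)
  rw [abs_lt] at e₁ e₂ e₃ ⊢
  constructor <;> linarith [e₁.1, e₁.2, e₂.1, e₂.2, e₃.1, e₃.2]
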